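/- If b1 and b2 are two distinct bottleneck states of a finite MDP with at least one goal-reaching trace, and neither equals s0, then in every goal-reaching trace the first visits to b1 and b2 occur in the same relative order; moreover deleting b1 from the underlying graph makes b2 unreachable from s0 or makes goals unreachable from b2 (depending on the order), establishing that bottlenecks form a chain in the reachability order. -/

import Mathlib

/-- A goal-reaching path in the directed graph of nonzero-probability transitions. -/
def IsGoalPath {V : Type} (E : V → V → Prop) (s0 : V) (SG : Set V) (p : List V) : Prop :=
  p ≠ [] ∧ p.head? = some s0 ∧ p.Chain' E ∧ ∃ g ∈ SG, p.getLast? = some g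

/-- A bottleneck vertex: on every path from `s0` to a goal. -/
def Bottleneck {V : Type} (E : V → V → Prop) (s0 : V) (SG : Set V) (b : V) : Prop :=
  ∀ p : List V, IsGoalPath E s0 SG p → b ∈ p

section Helpers

variable {V : Type} [DecidableEq V]

lemma ne_nil_of_head?_eq_some {p : List V} {x : V} (h : p.head? = some x) : p ≠ [] := by
  intro h'; subst h'; simp at h

lemma getLast?_drop_of_lt {l : List V} {n : ℕ} (h : n < l.length) :
    (l.drop n).getLast? = l.getLast? := by
  conv_rhs => rw [← List.take_append_drop n l]
  rw [List.getLast?_append_of_ne_nil]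
  intro h'
  have := congrArg List.length h'
  simp at this
  omega

/-- Splicing two paths at a common vertex. -/
lemma splice_chain {E : V → V → Prop} {p q : List V} {x : V}
    (hp : p.Chain' E) (hq : q.Chain' E)
    (hpl : p.getLast? = some x) (hqh : q.head? = some x) :
    (p ++ q.tail).Chain' E ∧ (p ++ q.tail).head? = p.head? ∧
      (p ++ q.tail).getLast? = q.getLast? := by
  have hpne : p ≠ [] := by intro h'; subst h'; simp at hpl
  obtain ⟨c, t, rfl⟩ : ∃ c t, q = c :: t := by
    cases q with
    | nil => simp at hqh
    | cons c t => exact ⟨c, t, rfl⟩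
  have hcx : c = x := by simpa using hqh
  rw [List.Chain', List.isChain_cons] at hq
  refine ⟨List.isChain_append.2 ⟨hp, hq.2, ?_⟩, List.head?_append_of_ne_nil _ hpne, ?_⟩
  · intro a ha b hb
    have ha' : a = x := by rw [hpl] at ha; exact (by simpa using ha : x = a).symm
    rw [ha', ← hcx]
    exact hq.1 b hb
  · cases t with
    | nil => simp only [List.tail_cons, List.append_nil, List.getLast?_singleton]
             rw [hpl, hcx]
    | cons d t' =>
      simp only [List.tail_cons]
      rw [List.getLast?_append_of_ne_nil _ (by simp : (d :: t') ≠ []),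
        List.getLast?_cons_cons]

lemma splice_goal {E : V → V → Prop} {s0 : V} {SG : Set V} {x g : V} {p q : List V}
    (hp : p.Chain' E) (hph : p.head? = some s0) (hpl : p.getLast? = some x)
    (hq : q.Chain' E) (hqh : q.head? = some x) (hql : q.getLast? = some g)
    (hg : g ∈ SG) :
    IsGoalPath E s0 SG (p ++ q.tail) ∧ ∀ y ∈ p ++ q.tail, y ∈ p ∨ y ∈ q := by
  obtain ⟨hc, hh, hl⟩ := splice_chain hp hq hpl hqh
  refine ⟨⟨?_, by rw [hh]; exact hph, hc, g, hg, by rw [hl]; exact hql⟩, ?_⟩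
  · intro h'
    have := ne_nil_of_head?_eq_some hph
    simp [List.append_eq_nil_iff] at h'
    exact this h'.1
  · intro y hy
    rcases List.mem_append.1 hy with h | h
    · exact Or.inl h
    · exact Or.inr (List.mem_of_mem_tail h)

lemma indexOf_lt_of_mem_take {l : List V} {b : V} {n : ℕ} (h : b ∈ l.take n) :
    l.idxOf b < n := by
  have h1 := List.idxOf_append_of_mem (l₂ := l.drop n) h
  rw [List.take_append_drop] at h1
  rw [h1]
  calc (l.take n).idxOf b < (l.take n).length := List.idxOf_lt_length_iff.2 h
    _ ≤ n := by simp [List.length_take]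

lemma mem_take_of_indexOf_lt {l : List V} {b : V} {n : ℕ} (hb : b ∈ l)
    (h : l.idxOf b < n) : b ∈ l.take n := by
  have hlt : l.idxOf b < l.length := List.idxOf_lt_length_iff.2 hb
  have hlen : l.idxOf b < (l.take n).length := by simp [List.length_take]; omega
  have : (l.take n)[l.idxOf b]'hlen = b := by
    rw [List.getElem_take]
    exact List.getElem_idxOf hlt
  exact this ▸ List.getElem_mem hlen

lemma getLast?_take_indexOf {l : List V} {b : V} (hb : b ∈ l) :
    (l.take (l.idxOf b + 1)).getLast? = some b := by
  have hlt : l.idxOf b < l.length := List.idxOf_lt_length_iff.2 hb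
  rw [List.getLast?_eq_getElem?]
  have hlen : (l.take (l.idxOf b + 1)).length = l.idxOf b + 1 := by
    simp [List.length_take]; omega
  rw [hlen]
  simp only [Nat.add_sub_cancel]
  rw [List.getElem?_take]
  simp only [Nat.lt_succ_self, if_true]
  rw [List.getElem?_eq_getElem hlt, List.getElem_idxOf hlt]

lemma head?_drop_indexOf {l : List V} {b : V} (hb : b ∈ l) :
    (l.drop (l.idxOf b)).head? = some b := by
  rw [List.head?_drop]
  have hlt : l.idxOf b < l.length := List.idxOf_lt_length_iff.2 hb
  rw [List.getElem?_eq_getElem hlt, List.getElem_idxOf hlt]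

lemma head?_take_succ {l : List V} {n : ℕ} : (l.take (n + 1)).head? = l.head? := by
  cases l with
  | nil => simp
  | cons c t => simp [List.take_succ_cons]

lemma not_mem_drop_of_nodup {l : List V} (hnd : l.Nodup) {a : V} (ha : a ∈ l) {n : ℕ}
    (h : l.idxOf a < n) : a ∉ l.drop n := by
  intro hmem
  have h1 : a ∈ l.take n := mem_take_of_indexOf_lt ha h
  have h2 : (l.take n ++ l.drop n).Nodup := by rw [List.take_append_drop]; exact hnd
  exact (List.nodup_append.1 h2).2.2 a h1 a hmem rfl

lemma not_mem_take_of_le {l : List V} {a b : V} (hab : a ≠ b) (ha : a ∈ l) (hb : b ∈ l)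
    (h : l.idxOf b ≤ l.idxOf a) : a ∉ l.take (l.idxOf b + 1) := by
  intro hmem
  have h1 : l.idxOf a < l.idxOf b + 1 := indexOf_lt_of_mem_take hmem
  have heq : l.idxOf a = l.idxOf b := by omega
  have hlta : l.idxOf a < l.length := List.idxOf_lt_length_iff.2 ha
  have hltb : l.idxOf b < l.length := List.idxOf_lt_length_iff.2 hb
  apply hab
  have e1 : l[l.idxOf a]? = some a := List.getElem?_idxOf ha
  have e2 : l[l.idxOf b]? = some b := List.getElem?_idxOf hb
  rw [heq, e2] at e1
  exact (Option.some_inj.1 e1).symm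

/-- Every nonempty chain can be shortened to a duplicate-free chain with the
same head and last element. -/
lemma exists_nodup_path {E : V → V → Prop} :
    ∀ (n : ℕ) (p : List V), p.length ≤ n → p.Chain' E → p ≠ [] →
      ∃ q : List V, q.Chain' E ∧ q ≠ [] ∧ q.head? = p.head? ∧
        q.getLast? = p.getLast? ∧ q.Nodup := by
  intro n
  induction n with
  | zero =>
    intro p hlen _ hne
    exact absurd (List.length_eq_zero_iff.1 (Nat.le_zero.1 hlen)) hne
  | succ n ih =>
    intro p hlen hc hne
    by_cases hnd : p.Nodup
    · exact ⟨p, hc, hne, rfl, rfl, hnd⟩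
    · rw [List.Nodup, List.pairwise_iff_getElem] at hnd
      push_neg at hnd
      obtain ⟨i, j, hi, hj, hij, heq⟩ := hnd
      -- splice p.take (i+1) with p.drop j at the common vertex p[i] = p[j]
      have hchaint : (p.take (i + 1)).Chain' E := hc.take _
      have hchaind : (p.drop j).Chain' E := hc.drop _
      have hlt : (p.take (i + 1)).getLast? = some (p[j]'hj) := by
        rw [List.getLast?_eq_getElem?]
        have hlen' : (p.take (i + 1)).length = i + 1 := by simp [List.length_take]; omega
        rw [hlen']
        simp only [Nat.add_sub_cancel]
        rw [List.getElem?_take]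
        simp only [Nat.lt_succ_self, if_true]
        rw [List.getElem?_eq_getElem hi, heq]
      have hhd : (p.drop j).head? = some (p[j]'hj) := by
        rw [List.head?_drop, List.getElem?_eq_getElem hj]
      obtain ⟨hc', hh', hl'⟩ := splice_chain hchaint hchaind hlt hhd
      set p' := p.take (i + 1) ++ (p.drop j).tail with hp'
      have h5 : p'.length = (p.take (i+1)).length + ((p.drop j).tail).length :=
        List.length_append
      rw [List.length_take, List.length_tail, List.length_drop,
        Nat.min_eq_left (by omega)] at h5
      have hlen' : p'.length ≤ n := by omega
      have hne' : p' ≠ [] := by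
        intro h'
        rw [h'] at h5
        simp at h5
        omega
      obtain ⟨q, hq1, hq2, hq3, hq4, hq5⟩ := ih p' hlen' hc' hne'
      refine ⟨q, hq1, hq2, ?_, ?_, hq5⟩
      · rw [hq3, hh', head?_take_succ]
      · rw [hq4, hl', getLast?_drop_of_lt hj]

/-- The key ordering lemma: a nodup witness path fixes the first-visit order of
two bottlenecks in every goal path. -/
lemma key_order {V : Type} [DecidableEq V] {E : V → V → Prop} {s0 : V} {SG : Set V}
    {p0 : List V} (h0 : IsGoalPath E s0 SG p0) (hnd : p0.Nodup)
    {a b : V} (hab : a ≠ b) (hba : Bottleneck E s0 SG a) (hbb : Bottleneck E s0 SG b)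
    (hord : p0.idxOf a < p0.idxOf b) :
    ∀ q : List V, IsGoalPath E s0 SG q → q.idxOf a < q.idxOf b := by
  intro q hq
  by_contra hle
  push_neg at hle
  obtain ⟨hqne, hqh, hqc, g0, hg0, hql⟩ := hq
  obtain ⟨h0ne, h0h, h0c, g, hg, h0l⟩ := h0
  have haq : a ∈ q := hba q ⟨hqne, hqh, hqc, g0, hg0, hql⟩
  have hbq : b ∈ q := hbb q ⟨hqne, hqh, hqc, g0, hg0, hql⟩
  have hbp : b ∈ p0 := hbb p0 ⟨h0ne, h0h, h0c, g, hg, h0l⟩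
  have hap : a ∈ p0 := hba p0 ⟨h0ne, h0h, h0c, g, hg, h0l⟩
  -- left: q.take (q.idxOf b + 1) from s0 to b, avoiding a
  -- right: p0.drop (p0.idxOf b) from b to g, avoiding a
  have hleft := splice_goal (x := b) (hqc.take (q.idxOf b + 1))
    (by rw [head?_take_succ]; exact hqh) (getLast?_take_indexOf hbq)
    (h0c.drop (p0.idxOf b)) (head?_drop_indexOf hbp)
    (by rw [getLast?_drop_of_lt (List.idxOf_lt_length_iff.2 hbp)]; exact h0l) hg
  have hmem := hba _ hleft.1
  rcases hleft.2 a hmem with h | h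
  · exact not_mem_take_of_le hab haq hbq hle h
  · exact not_mem_drop_of_nodup hnd hap hord h

end Helpers

/-- for distinct bottlenecks `b1 ≠ b2`, neither equal to `s0`, of a
finite MDP (viewed as the directed graph of nonzero-probability transitions) with some
goal reachable from `s0`: in every goal-reaching trace the first visits to `b1` and
`b2` occur in the same relative order, and deleting `b1` either makes `b2` unreachable
from `s0` or makes every goal unreachable from `b2` (depending on that order) —
bottlenecks form a chain in the reachability order. -/
theorem stmt19 {V : Type} [Fintype V] [DecidableEq V]
    (E : V → V → Prop) (s0 : V) (SG : Set V)
    (hreach : ∃ p : List V, IsGoalPath E s0 SG p)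
    (b1 b2 : V) (hne : b1 ≠ b2) (h1 : b1 ≠ s0) (h2 : b2 ≠ s0)
    (hb1 : Bottleneck E s0 SG b1) (hb2 : Bottleneck E s0 SG b2) :
    ((∀ p : List V, IsGoalPath E s0 SG p → p.idxOf b1 < p.idxOf b2) ∨
     (∀ p : List V, IsGoalPath E s0 SG p → p.idxOf b2 < p.idxOf b1)) ∧
    (¬ Relation.ReflTransGen (fun x y => E x y ∧ x ≠ b1 ∧ y ≠ b1) s0 b2 ∨
     ¬ ∃ g ∈ SG, Relation.ReflTransGen (fun x y => E x y ∧ x ≠ b1 ∧ y ≠ b1) b2 g) := by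
  obtain ⟨p, hp⟩ := hreach
  obtain ⟨hpne, hph, hpc, g, hg, hpl⟩ := hp
  obtain ⟨p0, h0c, h0ne, h0h, h0l, h0nd⟩ := exists_nodup_path p.length p le_rfl hpc hpne
  have h0 : IsGoalPath E s0 SG p0 :=
    ⟨h0ne, by rw [h0h]; exact hph, h0c, g, hg, by rw [h0l]; exact hpl⟩
  have h0l' : p0.getLast? = some g := by rw [h0l]; exact hpl
  have hb1m : b1 ∈ p0 := hb1 p0 h0
  have hb2m : b2 ∈ p0 := hb2 p0 h0
  have hIne : p0.idxOf b1 ≠ p0.idxOf b2 := by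
    intro h
    apply hne
    have e1 := List.getElem?_idxOf hb1m
    have e2 := List.getElem?_idxOf hb2m
    rw [h, e2] at e1
    exact (Option.some_inj.1 e1).symm
  rcases lt_or_gt_of_ne hIne with hord | hord
  · refine ⟨Or.inl (key_order h0 h0nd hne hb1 hb2 hord), Or.inl ?_⟩
    intro hRT
    obtain ⟨l, hchain, hlast⟩ := List.exists_isChain_cons_of_relationReflTransGen hRT
    have hmchain : (s0 :: l).Chain' E := hchain.imp (fun x y h => h.1)
    have hmlast : (s0 :: l).getLast? = some b2 := by
      rw [List.getLast?_eq_getLast (l := s0 :: l) (List.cons_ne_nil _ _), hlast]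
    have havoid : ∀ y ∈ s0 :: l, y ≠ b1 := by
      intro y hy
      rcases List.mem_cons.1 hy with h | h
      · rw [h]; exact h1.symm
      · exact List.IsChain.induction (fun z => z ≠ b1) (s0 :: l) hchain
          (fun x y hr _ => hr.2.2) (fun _ => h1.symm) y (List.mem_cons_of_mem _ h)
    have hsp := splice_goal (x := b2) hmchain (rfl : (s0 :: l).head? = some s0) hmlast
      (h0c.drop (p0.idxOf b2)) (head?_drop_indexOf hb2m)
      (by rw [getLast?_drop_of_lt (List.idxOf_lt_length_iff.2 hb2m)]; exact h0l') hg
    have hmem := hb1 _ hsp.1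
    rcases hsp.2 b1 hmem with h | h
    · exact havoid b1 h rfl
    · exact not_mem_drop_of_nodup h0nd hb1m hord h
  · refine ⟨Or.inr (key_order h0 h0nd hne.symm hb2 hb1 hord), Or.inr ?_⟩
    rintro ⟨g', hg', hRT⟩
    obtain ⟨l, hchain, hlast⟩ := List.exists_isChain_cons_of_relationReflTransGen hRT
    have hmchain : (b2 :: l).Chain' E := hchain.imp (fun x y h => h.1)
    have hmlast : (b2 :: l).getLast? = some g' := by
      rw [List.getLast?_eq_getLast (l := b2 :: l) (List.cons_ne_nil _ _), hlast]
    have havoid : ∀ y ∈ b2 :: l, y ≠ b1 := by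
      intro y hy
      rcases List.mem_cons.1 hy with h | h
      · rw [h]; exact hne.symm
      · exact List.IsChain.induction (fun z => z ≠ b1) (b2 :: l) hchain
          (fun x y hr _ => hr.2.2) (fun _ => hne.symm) y (List.mem_cons_of_mem _ h)
    have hsp := splice_goal (x := b2) (h0c.take (p0.idxOf b2 + 1))
      (by rw [head?_take_succ, h0h]; exact hph) (getLast?_take_indexOf hb2m)
      hmchain (rfl : (b2 :: l).head? = some b2) hmlast hg'
    have hmem := hb1 _ hsp.1
    rcases hsp.2 b1 hmem with h | h
    · exact not_mem_take_of_le hne hb1m hb2m (le_of_lt hord) h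
    · exact havoid b1 h rfl
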